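/- For 0 ≤ ρ₁ < ρ₂ < 1 and L > 0, the asymmetric sensitivity property holds for the Hellinger contrast in the following form: d_H(ρ₁, ρ₁ + δ | L) with ρ₁ + δ < 1 is strictly increasing in δ ∈ [0, 1−ρ₁), and its one-sided limit as δ → (1−ρ₁)⁻ equals 1, whereas d_H(ρ₁, ρ₁ − δ | L) for δ ∈ [0, ρ₁] is bounded above by 1 − [4√(1-ρ₁²)/(4−ρ₁²)]^L < 1. -/

import Mathlib

noncomputable def dH (L r1 r2 : ℝ) : ℝ :=
  1 - (4 * Real.sqrt ((1 - r1 ^ 2) * (1 - r2 ^ 2)) / (4 - (r1 + r2) ^ 2)) ^ L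

/-!
Write `dH L r₁ r₂ = 1 - B(r₁, r₂) ^ L`. For fixed `r₁ ∈ (-1, 1)` the derivative of `B(r₁, ·)` on
`(-1, 1)` is `4 (1 - r₁²)(r₁ - y)(y (r₁ + y) + 2) / (√((1 - r₁²)(1 - y²)) (4 - (r₁ + y)²)²)`,
whose sign is that of `r₁ - y`. So `B(r₁, ·)` increases on `[-1, r₁]` and decreases on `[r₁, 1]`,
where it falls to `B(r₁, 1) = 0`; raising to the power `L > 0` and subtracting from `1` turns
this into the three claims, the bound on the left coming from `B(r₁, r₁ - d) ≥ B(r₁, 0) > 0`.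
-/

open Real Set Filter Topology

noncomputable def bhattacharyya (r₁ r₂ : ℝ) : ℝ :=
  4 * √((1 - r₁ ^ 2) * (1 - r₂ ^ 2)) / (4 - (r₁ + r₂) ^ 2)

lemma dH_eq (L r₁ r₂ : ℝ) : dH L r₁ r₂ = 1 - bhattacharyya r₁ r₂ ^ L := rfl

section Bhattacharyya

variable {r y : ℝ}

lemma one_sub_sq_pos (hy₀ : -1 < y) (hy₁ : y < 1) : 0 < 1 - y ^ 2 := by
  nlinarith

lemma four_sub_add_sq_pos (hr₀ : -1 < r) (hr₁ : r < 1) (hy₀ : -1 ≤ y) (hy₁ : y ≤ 1) :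
    0 < 4 - (r + y) ^ 2 := by
  nlinarith

lemma mul_add_add_two_pos (hr₀ : -1 < r) (hr₁ : r < 1) (hy₀ : -1 < y) (hy₁ : y < 1) :
    0 < y * (r + y) + 2 := by
  nlinarith

lemma bhattacharyya_pos (hr₀ : -1 < r) (hr₁ : r < 1) (hy₀ : -1 < y) (hy₁ : y < 1) :
    0 < bhattacharyya r y := by
  have := sqrt_pos.2 (mul_pos (one_sub_sq_pos hr₀ hr₁) (one_sub_sq_pos hy₀ hy₁))
  exact div_pos (by positivity) (four_sub_add_sq_pos hr₀ hr₁ hy₀.le hy₁.le)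

lemma bhattacharyya_one : bhattacharyya r 1 = 0 := by
  simp [bhattacharyya]

lemma bhattacharyya_zero_right : bhattacharyya r 0 = 4 * √(1 - r ^ 2) / (4 - r ^ 2) := by
  simp [bhattacharyya]

lemma continuousAt_bhattacharyya (h : (r + y) ^ 2 ≠ 4) :
    ContinuousAt (bhattacharyya r) y := by
  unfold bhattacharyya
  exact ContinuousAt.div (by fun_prop) (by fun_prop) (sub_ne_zero.2 h.symm)

lemma continuousOn_bhattacharyya (hr₀ : -1 < r) (hr₁ : r < 1) :
    ContinuousOn (bhattacharyya r) (Icc (-1) 1) := fun _ hy =>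
  (continuousAt_bhattacharyya (sub_pos.1 (four_sub_add_sq_pos hr₀ hr₁ hy.1 hy.2)).ne)
    |>.continuousWithinAt

lemma hasDerivAt_bhattacharyya (hr₀ : -1 < r) (hr₁ : r < 1) (hy₀ : -1 < y) (hy₁ : y < 1) :
    HasDerivAt (bhattacharyya r)
      (4 * (1 - r ^ 2) * (r - y) * (y * (r + y) + 2) /
        (√((1 - r ^ 2) * (1 - y ^ 2)) * (4 - (r + y) ^ 2) ^ 2)) y := by
  have hprod := mul_pos (one_sub_sq_pos hr₀ hr₁) (one_sub_sq_pos hy₀ hy₁)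
  have hden := (four_sub_add_sq_pos hr₀ hr₁ hy₀.le hy₁.le).ne'
  have hnum : HasDerivAt (fun x => (1 - r ^ 2) * (1 - x ^ 2)) ((1 - r ^ 2) * -(2 * y)) y := by
    simpa using ((hasDerivAt_pow 2 y).const_sub 1).const_mul (1 - r ^ 2)
  have hsq : HasDerivAt (fun x => (r + x) ^ 2) (2 * (r + y)) y := by
    simpa using ((hasDerivAt_id y).const_add r).fun_pow 2
  have hS := sq_sqrt hprod.le
  have hSpos := sqrt_pos.2 hprod
  unfold bhattacharyya
  refine (((hnum.sqrt hprod.ne').const_mul 4).div (hsq.const_sub 4) hden).congr_deriv ?_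
  field_simp
  linear_combination 2 * (r + y) * hS

lemma strictMonoOn_bhattacharyya (hr₀ : -1 < r) (hr₁ : r < 1) :
    StrictMonoOn (bhattacharyya r) (Icc (-1) r) := by
  refine strictMonoOn_of_deriv_pos (convex_Icc _ _)
    ((continuousOn_bhattacharyya hr₀ hr₁).mono (Icc_subset_Icc_right hr₁.le)) fun x hx => ?_
  obtain ⟨hx₀, hxr⟩ : -1 < x ∧ x < r := by rwa [interior_Icc] at hx
  have hx₁ : x < 1 := hxr.trans hr₁
  rw [(hasDerivAt_bhattacharyya hr₀ hr₁ hx₀ hx₁).deriv]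
  have := one_sub_sq_pos hr₀ hr₁
  have := one_sub_sq_pos hx₀ hx₁
  have := four_sub_add_sq_pos hr₀ hr₁ hx₀.le hx₁.le
  have := mul_add_add_two_pos hr₀ hr₁ hx₀ hx₁
  have := sub_pos.2 hxr
  positivity

lemma strictAntiOn_bhattacharyya (hr₀ : -1 < r) (hr₁ : r < 1) :
    StrictAntiOn (bhattacharyya r) (Icc r 1) := by
  refine strictAntiOn_of_deriv_neg (convex_Icc _ _)
    ((continuousOn_bhattacharyya hr₀ hr₁).mono (Icc_subset_Icc_left hr₀.le)) fun x hx => ?_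
  obtain ⟨hrx, hx₁⟩ : r < x ∧ x < 1 := by rwa [interior_Icc] at hx
  have hx₀ : -1 < x := hr₀.trans hrx
  rw [(hasDerivAt_bhattacharyya hr₀ hr₁ hx₀ hx₁).deriv]
  have := one_sub_sq_pos hr₀ hr₁
  have := sqrt_pos.2 (mul_pos this (one_sub_sq_pos hx₀ hx₁))
  have := four_sub_add_sq_pos hr₀ hr₁ hx₀.le hx₁.le
  have := mul_add_add_two_pos hr₀ hr₁ hx₀ hx₁
  refine div_neg_of_neg_of_pos ?_ (by positivity)
  exact mul_neg_of_neg_of_pos (mul_neg_of_pos_of_neg (by positivity) (sub_neg.2 hrx)) this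

end Bhattacharyya

theorem stmt_18 (L r1 : ℝ) (hL : 0 < L) (h1 : r1 ∈ Set.Ico (0 : ℝ) 1) :
    StrictMonoOn (fun d => dH L r1 (r1 + d)) (Set.Ico 0 (1 - r1)) ∧
      Filter.Tendsto (fun d => dH L r1 (r1 + d)) (nhdsWithin (1 - r1) (Set.Iio (1 - r1)))
        (nhds 1) ∧
      ∀ d ∈ Set.Icc 0 r1,
        dH L r1 (r1 - d) ≤ 1 - (4 * Real.sqrt (1 - r1 ^ 2) / (4 - r1 ^ 2)) ^ L ∧
          1 - (4 * Real.sqrt (1 - r1 ^ 2) / (4 - r1 ^ 2)) ^ L < 1 := by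
  obtain ⟨hr₀, hr₁⟩ := h1
  have hr : -1 < r1 := by linarith
  refine ⟨fun a ha b hb hab => ?_, ?_, fun d hd => ?_⟩
  · have hb₁ : r1 + b < 1 := by linarith [hb.2]
    have hlt : bhattacharyya r1 (r1 + b) < bhattacharyya r1 (r1 + a) :=
      strictAntiOn_bhattacharyya hr hr₁ ⟨by linarith [ha.1], by linarith [ha.2]⟩
        ⟨by linarith [hb.1], hb₁.le⟩ (by linarith)
    have := bhattacharyya_pos hr hr₁ (by linarith [hb.1]) hb₁
    simp only [dH_eq]
    gcongr
  · have hB : ContinuousAt (fun d => bhattacharyya r1 (r1 + d)) (1 - r1) :=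
      (continuousAt_bhattacharyya (y := 1) (by nlinarith)).comp_of_eq (by fun_prop) (by ring)
    have hB0 : Tendsto (fun d => bhattacharyya r1 (r1 + d)) (𝓝[<] (1 - r1)) (𝓝 0) := by
      simpa [bhattacharyya_one] using hB.tendsto.mono_left nhdsWithin_le_nhds
    simpa [dH_eq, zero_rpow hL.ne'] using tendsto_const_nhds.sub (hB0.rpow_const (Or.inr hL.le))
  · have hle : bhattacharyya r1 0 ≤ bhattacharyya r1 (r1 - d) :=
      (strictMonoOn_bhattacharyya hr hr₁).monotoneOn ⟨by norm_num, hr₀⟩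
        ⟨by linarith [hd.2], by linarith [hd.1]⟩ (by linarith [hd.2])
    have hpos := bhattacharyya_pos hr hr₁ (by norm_num) one_pos
    rw [dH_eq, ← bhattacharyya_zero_right]
    exact ⟨by gcongr, sub_lt_self 1 (rpow_pos_of_pos hpos L)⟩
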